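/- Let M be an orthogonal matroid on [n]∪[n]* with all bases of the same parity σ of |B∩[n]*|. Let C₁ = FC(B, e₁) and C₂ = FC(B, e₂) be a modular pair of circuits (fundamental circuits with respect to a common basis B and distinct e₁, e₂ ∈ B*). Then the following are equivalent: (1) C₁ ∩ C₂* ≠ ∅; (2) |C₁ ∩ C₂*| = 2; (3) B △ {e₁,e₁*,e₂,e₂*} is a basis. -/
import Mathlib


/-- The ground set `[n] ∪ [n]*`: the element `i ∈ [n]` is `(i, false)` and its
starred copy `i*` is `(i, true)`. -/
abbrev GroundSet (n : ℕ) := Fin n × Bool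

/-- The involution `x ↦ x*`. -/
def st {n : ℕ} (x : GroundSet n) : GroundSet n := (x.1, !x.2)

/-- The skew pair `{x, x*}`. -/
def skw {n : ℕ} (x : GroundSet n) : Finset (GroundSet n) := {x, st x}

/-- The skew pair `{i, i*}` of an index `i ∈ [n]`. -/
def pr {n : ℕ} (i : Fin n) : Finset (GroundSet n) := {(i, false), (i, true)}

/-- A transversal: a subset of `[n] ∪ [n]*` containing exactly one of `i`, `i*`
for each `i ∈ [n]`. -/
def IsTransversal {n : ℕ} (T : Finset (GroundSet n)) : Prop :=
  ∀ i : Fin n, ((i, false) ∈ T ↔ (i, true) ∉ T)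

/-- An orthogonal matroid on `[n] ∪ [n]*`: a nonempty collection of transversals
satisfying the strong exchange axiom. -/
def IsOrthogonalMatroid {n : ℕ} (𝓑 : Finset (Finset (GroundSet n))) : Prop :=
  𝓑.Nonempty ∧ (∀ B ∈ 𝓑, IsTransversal B) ∧
  ∀ B₁ ∈ 𝓑, ∀ B₂ ∈ 𝓑, ∀ x ∈ symmDiff B₁ B₂,
    ∃ y ∈ (symmDiff B₁ B₂) \ skw x,
      symmDiff B₁ (skw x ∪ skw y) ∈ 𝓑 ∧ symmDiff B₂ (skw x ∪ skw y) ∈ 𝓑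

/-- A subtransversal: a subset of a transversal, i.e. a set containing no full
skew pair. -/
def IsSubtransversal {n : ℕ} (C : Finset (GroundSet n)) : Prop :=
  ∀ i : Fin n, ¬((i, false) ∈ C ∧ (i, true) ∈ C)

/-- A circuit of the collection `𝓑`: a minimal subtransversal not contained in
any member of `𝓑`. -/
def IsCircuit {n : ℕ} (𝓑 : Finset (Finset (GroundSet n)))
    (C : Finset (GroundSet n)) : Prop :=
  IsSubtransversal C ∧ (∀ B ∈ 𝓑, ¬ C ⊆ B) ∧
  (∀ C' ⊂ C, ∃ B ∈ 𝓑, C' ⊆ B)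

variable {n : ℕ}

@[simp] lemma st_st (x : GroundSet n) : st (st x) = x := by
  cases x with | mk i b => cases b <;> rfl

lemma st_ne (x : GroundSet n) : st x ≠ x := by
  cases x with | mk i b => cases b <;> simp [st]

lemma st_inj {x y : GroundSet n} (h : st x = st y) : x = y := by
  have := congrArg st h; simpa using this

lemma mem_skw {x y : GroundSet n} : y ∈ skw x ↔ y = x ∨ y = st x := by
  simp [skw]

lemma skw_st (x : GroundSet n) : skw (st x) = skw x := by
  simp [skw, Finset.pair_comm]

lemma st_mem_skw_iff {x y : GroundSet n} : st y ∈ skw x ↔ y ∈ skw x := by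
  constructor
  · rw [mem_skw, mem_skw]
    rintro (h | h)
    · right; rw [← h, st_st]
    · left; exact st_inj h
  · rw [mem_skw, mem_skw]
    rintro (rfl | rfl)
    · right; rfl
    · left; simp

lemma trans_st {T : Finset (GroundSet n)} (hT : IsTransversal T) (x : GroundSet n) :
    x ∈ T ↔ st x ∉ T := by
  cases x with | mk i b =>
  cases b
  · exact hT i
  · have := hT i; simp only [st]; tauto

lemma subtrans_not_both {C : Finset (GroundSet n)} (hC : IsSubtransversal C)
    (x : GroundSet n) : ¬(x ∈ C ∧ st x ∈ C) := by
  cases x with | mk i b =>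
  cases b
  · exact hC i
  · have := hC i; simp only [st]; tauto

lemma skw_disjoint {x y : GroundSet n} (h1 : y ∉ skw x) : Disjoint (skw x) (skw y) := by
  rw [Finset.disjoint_left]
  intro a ha hay
  rw [mem_skw] at ha hay h1
  rcases hay with rfl | rfl
  · exact h1 ha
  · rcases ha with h | h
    · exact h1 (Or.inr (by rw [← h, st_st]))
    · exact h1 (Or.inl (st_inj h))

lemma trans_symmDiff_skw {T : Finset (GroundSet n)} (hT : IsTransversal T)
    (a : GroundSet n) : IsTransversal (symmDiff T (skw a)) := by
  intro i
  have h0 := hT i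
  have hf : ((i, false) : GroundSet n) ∈ skw a ↔ ((i, true) : GroundSet n) ∈ skw a := by
    rw [mem_skw, mem_skw]
    cases a with | mk j b =>
    cases b <;> simp [st, Prod.ext_iff]
  simp only [Finset.mem_symmDiff]
  tauto

lemma mem_image_st {C : Finset (GroundSet n)} {x : GroundSet n} :
    x ∈ C.image st ↔ st x ∈ C := by
  simp only [Finset.mem_image]
  constructor
  · rintro ⟨c, hc, rfl⟩; simpa using hc
  · intro hx; exact ⟨st x, hx, by simp⟩

/-- In the symmetric difference of two transversals, skew partners travel together. -/
lemma symmDiff_pairs {A T : Finset (GroundSet n)} (hA : IsTransversal A)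
    (hT : IsTransversal T) {y : GroundSet n} (hy : y ∈ symmDiff A T) :
    st y ∈ symmDiff A T := by
  rw [Finset.mem_symmDiff] at hy ⊢
  have h1 := trans_st hA y
  have h2 := trans_st hT y
  tauto

/-- Membership in the near-transversal `T = B △ {e,e*}` when `e* ∈ B`. -/
lemma mem_fundT {B : Finset (GroundSet n)} (hBt : IsTransversal B) {e : GroundSet n}
    (he : st e ∈ B) {y : GroundSet n} :
    y ∈ symmDiff B (skw e) ↔ (y = e ∨ (y ∈ B ∧ y ∉ skw e)) := by
  have heB : e ∉ B := by
    intro h'; exact (trans_st hBt e).mp h' he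
  rw [Finset.mem_symmDiff]
  constructor
  · rintro (⟨hyB, hys⟩ | ⟨hys, hyB⟩)
    · exact Or.inr ⟨hyB, hys⟩
    · rw [mem_skw] at hys
      rcases hys with rfl | rfl
      · exact Or.inl rfl
      · exact absurd he hyB
  · rintro (rfl | ⟨hyB, hys⟩)
    · exact Or.inr ⟨by rw [mem_skw]; left; rfl, heB⟩
    · exact Or.inl ⟨hyB, hys⟩

/-- If `T △ {x,x*}` is a basis, then `x` belongs to any circuit within the
transversal `T`. -/
lemma circuit_mem_of_basis {𝓑 : Finset (Finset (GroundSet n))}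
    {C : Finset (GroundSet n)} (hC : IsCircuit 𝓑 C) {T : Finset (GroundSet n)}
    (hT : IsTransversal T) (hCT : C ⊆ T) {x : GroundSet n} (hx : x ∈ T)
    (hb : symmDiff T (skw x) ∈ 𝓑) : x ∈ C := by
  by_contra hxC
  refine hC.2.1 _ hb ?_
  intro c hc
  rw [Finset.mem_symmDiff]
  refine Or.inl ⟨hCT hc, ?_⟩
  rw [mem_skw]
  rintro (rfl | rfl)
  · exact hxC hc
  · exact (trans_st hT x).mp hx (hCT hc)

/-- The forward half of the fundamental-circuit characterization. -/
lemma circuit_mem_char {𝓑 : Finset (Finset (GroundSet n))} (h : IsOrthogonalMatroid 𝓑)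
    {B : Finset (GroundSet n)} (hB : B ∈ 𝓑) {e : GroundSet n} (he : st e ∈ B)
    {C : Finset (GroundSet n)} (hC : IsCircuit 𝓑 C) (hCT : C ⊆ symmDiff B (skw e))
    {x : GroundSet n} (hx : x ∈ C) : symmDiff (symmDiff B (skw e)) (skw x) ∈ 𝓑 := by
  set T := symmDiff B (skw e) with hTdef
  have hBt : IsTransversal B := h.2.1 B hB
  have hTt : IsTransversal T := trans_symmDiff_skw hBt e
  have hTB : symmDiff T (skw e) = B := symmDiff_symmDiff_cancel_right (skw e) B
  have heT : e ∈ T := (mem_fundT hBt he).mpr (Or.inl rfl)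
  have heC : e ∈ C := circuit_mem_of_basis hC hTt hCT heT (by rw [hTB]; exact hB)
  by_cases hxe : x = e
  · subst hxe; rw [hTB]; exact hB
  -- x ≠ e; minimize |B' △ T| over bases B' ⊇ C \ {x}
  have hPne : (𝓑.filter (fun A => C.erase x ⊆ A)).Nonempty := by
    obtain ⟨B', hB', hsub⟩ := hC.2.2 (C.erase x) (Finset.erase_ssubset hx)
    exact ⟨B', Finset.mem_filter.mpr ⟨hB', hsub⟩⟩
  obtain ⟨B', hB'P, hmin⟩ := Finset.exists_min_image _
    (fun A => (symmDiff A T).card) hPne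
  rw [Finset.mem_filter] at hB'P
  obtain ⟨hB'𝓑, hCB'⟩ := hB'P
  have hB't : IsTransversal B' := h.2.1 B' hB'𝓑
  have hxB' : x ∉ B' := by
    intro hx'
    refine hC.2.1 B' hB'𝓑 ?_
    intro c hc
    by_cases hcx : c = x
    · rwa [hcx]
    · exact hCB' (Finset.mem_erase.mpr ⟨hcx, hc⟩)
  have hxT : x ∈ T := hCT hx
  -- an element of C other than x stays in B' and avoids any pair met by B' △ T
  have hCavoid : ∀ c ∈ C.erase x, ∀ w ∈ symmDiff B' T, c ∉ skw w := by
    intro c hc w hw hcw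
    have hcB' : c ∈ B' := hCB' hc
    have hcT : c ∈ T := hCT (Finset.mem_erase.mp hc).2
    rw [mem_skw] at hcw
    have hstw := symmDiff_pairs hB't hTt hw
    rw [Finset.mem_symmDiff] at hw hstw
    rcases hcw with rfl | rfl
    · tauto
    · have h1 := trans_st hTt w
      have h2 := trans_st hB't w
      tauto
  by_cases hsmall : symmDiff B' T ⊆ skw x
  · -- then B' = T △ skw x
    have hxSD : x ∈ symmDiff B' T := Finset.mem_symmDiff.mpr (Or.inr ⟨hxT, hxB'⟩)
    have hstxSD : st x ∈ symmDiff B' T := symmDiff_pairs hB't hTt hxSD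
    have heq : symmDiff B' T = skw x := by
      refine Finset.Subset.antisymm hsmall ?_
      intro a ha
      rw [mem_skw] at ha
      rcases ha with rfl | rfl
      · exact hxSD
      · exact hstxSD
    have : symmDiff T (skw x) = B' := by
      rw [← heq, symmDiff_comm B' T, symmDiff_symmDiff_cancel_left]
    rw [this]; exact hB'𝓑
  · obtain ⟨y0, hy0SD, hy0skx⟩ := Finset.not_subset.mp hsmall
    -- normalize so that y ∈ T \ B'
    obtain ⟨y, hyT, hyB', hysk⟩ : ∃ y, y ∈ T ∧ y ∉ B' ∧ y ∉ skw x := by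
      rcases Finset.mem_symmDiff.mp hy0SD with ⟨h1, h2⟩ | ⟨h1, h2⟩
      · refine ⟨st y0, ?_, ?_, ?_⟩
        · by_contra hc; exact h2 ((trans_st hTt y0).mpr hc)
        · exact fun hc => (trans_st hB't y0).mp h1 hc
        · rw [st_mem_skw_iff]; exact hy0skx
      · exact ⟨y0, h1, h2, hy0skx⟩
    have hyx : y ≠ x := by rintro rfl; exact hysk (by rw [mem_skw]; left; rfl)
    have hyC : y ∉ C := by
      intro hyc
      exact hyB' (hCB' (Finset.mem_erase.mpr ⟨hyx, hyc⟩))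
    have hye : y ≠ e := by
      rintro rfl; exact hyC heC
    obtain hyB : y ∈ B ∧ y ∉ skw e := by
      rcases (mem_fundT hBt he).mp hyT with rfl | hh
      · exact absurd rfl hye
      · exact hh
    have hySDB : y ∈ symmDiff B' B := Finset.mem_symmDiff.mpr (Or.inr ⟨hyB.1, hyB'⟩)
    obtain ⟨z, hzmem, hz1, hz2⟩ := h.2.2 B' hB'𝓑 B hB y hySDB
    rw [Finset.mem_sdiff] at hzmem
    obtain ⟨hzSD, hzsky⟩ := hzmem
    have hysky : y ∈ skw y := by rw [mem_skw]; left; rfl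
    -- C \ {x} avoids skw y
    have hCy : ∀ c ∈ C.erase x, c ∉ skw y := by
      intro c hc
      exact hCavoid c hc y (Finset.mem_symmDiff.mpr (Or.inr ⟨hyT, hyB'⟩))
    by_cases hze : z ∈ skw e
    · -- B △ (skw y ∪ skw e) = T △ skw y is then a basis containing C: contradiction
      have hskz : skw z = skw e := by
        rw [mem_skw] at hze
        rcases hze with rfl | rfl
        · rfl
        · exact skw_st e
      rw [hskz] at hz2
      have hid : symmDiff B (skw y ∪ skw e) = symmDiff T (skw y) := by
        have hdisj : Disjoint (skw e) (skw y) := skw_disjoint hyB.2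
        rw [hTdef, symmDiff_assoc]
        congr 1
        rw [hdisj.symmDiff_eq_sup, Finset.sup_eq_union, Finset.union_comm]
      rw [hid] at hz2
      refine absurd (hC.2.1 _ hz2) (not_not.mpr ?_)
      intro c hc
      rw [Finset.mem_symmDiff]
      refine Or.inl ⟨hCT hc, ?_⟩
      rw [mem_skw]
      rintro (rfl | rfl)
      · exact hyC hc
      · exact (trans_st hTt y).mp hyT (hCT hc)
    by_cases hzx : z ∈ skw x
    · -- B' △ (skw y ∪ skw x) is a basis containing C: contradiction
      have hskz : skw z = skw x := by
        rw [mem_skw] at hzx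
        rcases hzx with rfl | rfl
        · rfl
        · exact skw_st x
      rw [hskz] at hz1
      refine absurd (hC.2.1 _ hz1) (not_not.mpr ?_)
      intro c hc
      rw [Finset.mem_symmDiff]
      by_cases hcx : c = x
      · subst hcx
        exact Or.inr ⟨Finset.mem_union_right _ (by rw [mem_skw]; left; rfl), hxB'⟩
      · have hc' : c ∈ C.erase x := Finset.mem_erase.mpr ⟨hcx, hc⟩
        refine Or.inl ⟨hCB' hc', ?_⟩
        rw [Finset.mem_union]
        rintro (hcc | hcc)
        · exact hCy c hc' hcc
        · rw [mem_skw] at hcc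
          rcases hcc with rfl | rfl
          · exact hcx rfl
          · exact (trans_st hTt x).mp hxT (hCT hc)
    · -- main case: B' △ (skw y ∪ skw z) is a basis containing C \ {x}, strictly
      -- closer to T, contradicting minimality
      have hzSDT : z ∈ symmDiff B' T := by
        have hze' : z ∉ skw e := hze
        have hzB_iff : z ∈ B ↔ z ∈ T := by
          rw [mem_fundT hBt he]
          constructor
          · intro hzB; exact Or.inr ⟨hzB, hze'⟩
          · rintro (rfl | hh)
            · exact absurd (by rw [mem_skw]; left; rfl) hze'
            · exact hh.1
        rw [Finset.mem_symmDiff] at hzSD ⊢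
        tauto
      have hCz : ∀ c ∈ C.erase x, c ∉ skw z := fun c hc => hCavoid c hc z hzSDT
      have hB₅P : symmDiff B' (skw y ∪ skw z) ∈ 𝓑.filter (fun A => C.erase x ⊆ A) := by
        refine Finset.mem_filter.mpr ⟨hz1, ?_⟩
        intro c hc
        rw [Finset.mem_symmDiff]
        refine Or.inl ⟨hCB' hc, ?_⟩
        rw [Finset.mem_union]
        rintro (hcc | hcc)
        · exact hCy c hc hcc
        · exact hCz c hc hcc
      have hle := hmin _ hB₅P
      -- but |B₅ △ T| < |B' △ T|
      have hsub : skw y ∪ skw z ⊆ symmDiff B' T := by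
        intro a ha
        rw [Finset.mem_union, mem_skw, mem_skw] at ha
        have hySDT : y ∈ symmDiff B' T := Finset.mem_symmDiff.mpr (Or.inr ⟨hyT, hyB'⟩)
        rcases ha with (rfl | rfl) | (rfl | rfl)
        · exact hySDT
        · exact symmDiff_pairs hB't hTt hySDT
        · exact hzSDT
        · exact symmDiff_pairs hB't hTt hzSDT
      have hrw : symmDiff (symmDiff B' (skw y ∪ skw z)) T
          = (symmDiff B' T) \ (skw y ∪ skw z) := by
        rw [symmDiff_right_comm]
        ext a
        rw [Finset.mem_symmDiff, Finset.mem_sdiff]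
        constructor
        · rintro (⟨h1, h2⟩ | ⟨h1, h2⟩)
          · exact ⟨h1, h2⟩
          · exact absurd (hsub h1) h2
        · rintro ⟨h1, h2⟩
          exact Or.inl ⟨h1, h2⟩
      have hlt : ((symmDiff B' T) \ (skw y ∪ skw z)).card < (symmDiff B' T).card := by
        refine Finset.card_lt_card ?_
        refine ⟨Finset.sdiff_subset, ?_⟩
        intro hcontra
        have : y ∈ (symmDiff B' T) \ (skw y ∪ skw z) :=
          hcontra (Finset.mem_symmDiff.mpr (Or.inr ⟨hyT, hyB'⟩))
        rw [Finset.mem_sdiff, Finset.mem_union] at this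
        exact this.2 (Or.inl hysky)
      rw [hrw] at hle
      omega

/-- For a modular pair of fundamental circuits `C₁ = FC(B, e₁)`, `C₂ = FC(B, e₂)`
of an orthogonal matroid (with all bases of parity `σ`), the following are
equivalent: (1) `C₁ ∩ C₂* ≠ ∅`; (2) `|C₁ ∩ C₂*| = 2`; (3) `B △ {e₁,e₁*,e₂,e₂*}`
is a basis. -/
theorem modular_pair_second_kind {n : ℕ}
    (𝓑 : Finset (Finset (GroundSet n))) (h : IsOrthogonalMatroid 𝓑)
    (σ : ℕ) (hσ : ∀ B ∈ 𝓑, (B.filter (fun p => p.2 = true)).card % 2 = σ)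
    (B : Finset (GroundSet n)) (hB : B ∈ 𝓑)
    (e₁ e₂ : GroundSet n) (he₁ : st e₁ ∈ B) (he₂ : st e₂ ∈ B) (hee : e₁ ≠ e₂)
    (C₁ C₂ : Finset (GroundSet n))
    (hC₁ : IsCircuit 𝓑 C₁) (hC₂ : IsCircuit 𝓑 C₂)
    (hC₁T : C₁ ⊆ symmDiff B (skw e₁)) (hC₂T : C₂ ⊆ symmDiff B (skw e₂)) :
    ((C₁ ∩ C₂.image st).Nonempty ↔ (C₁ ∩ C₂.image st).card = 2)
      ∧ ((C₁ ∩ C₂.image st).Nonempty ↔ symmDiff B (skw e₁ ∪ skw e₂) ∈ 𝓑) := by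
  have hBt : IsTransversal B := h.2.1 B hB
  set T₁ := symmDiff B (skw e₁) with hT₁def
  set T₂ := symmDiff B (skw e₂) with hT₂def
  have hT₁t : IsTransversal T₁ := trans_symmDiff_skw hBt e₁
  have hT₂t : IsTransversal T₂ := trans_symmDiff_skw hBt e₂
  have hT₁B : symmDiff T₁ (skw e₁) = B := symmDiff_symmDiff_cancel_right (skw e₁) B
  have hT₂B : symmDiff T₂ (skw e₂) = B := symmDiff_symmDiff_cancel_right (skw e₂) B
  have he₁T₁ : e₁ ∈ T₁ := (mem_fundT hBt he₁).mpr (Or.inl rfl)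
  have he₂T₂ : e₂ ∈ T₂ := (mem_fundT hBt he₂).mpr (Or.inl rfl)
  have he₁C₁ : e₁ ∈ C₁ :=
    circuit_mem_of_basis hC₁ hT₁t hC₁T he₁T₁ (by rw [hT₁B]; exact hB)
  have he₂C₂ : e₂ ∈ C₂ :=
    circuit_mem_of_basis hC₂ hT₂t hC₂T he₂T₂ (by rw [hT₂B]; exact hB)
  -- e₁ ≠ st e₂, so the four elements e₁, e₁*, e₂, e₂* are distinct
  have hste : e₁ ≠ st e₂ := by
    intro heq
    have he₂e₁ : e₂ = st e₁ := by rw [heq, st_st]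
    have hskew : skw e₂ = skw e₁ := by rw [he₂e₁, skw_st]
    have hC₂T₁ : C₂ ⊆ T₁ := by rw [hT₁def, ← hskew]; exact hC₂T
    have he₁C₂ : e₁ ∈ C₂ := by
      refine circuit_mem_of_basis hC₂ hT₁t hC₂T₁ he₁T₁ (by rw [hT₁B]; exact hB)
    exact subtrans_not_both hC₂.1 e₁ ⟨he₁C₂, he₂e₁ ▸ he₂C₂⟩
  have he₂sk₁ : e₂ ∉ skw e₁ := by
    rw [mem_skw]
    rintro (rfl | heq)
    · exact hee rfl
    · exact hste (by rw [heq, st_st])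
  have he₁sk₂ : e₁ ∉ skw e₂ := by
    rw [mem_skw]
    rintro (rfl | heq)
    · exact hee rfl
    · exact hste heq
  have hste₂sk₁ : st e₂ ∉ skw e₁ := by
    rw [mem_skw]
    rintro (heq | heq)
    · exact hste heq.symm
    · exact hee (st_inj heq).symm
  have hste₁sk₂ : st e₁ ∉ skw e₂ := by
    rw [mem_skw]
    rintro (heq | heq)
    · exact hste (by rw [← heq, st_st])
    · exact hee (st_inj heq)
  have hste₂T₁ : st e₂ ∈ T₁ := (mem_fundT hBt he₁).mpr (Or.inr ⟨he₂, hste₂sk₁⟩)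
  have hste₁T₂ : st e₁ ∈ T₂ := (mem_fundT hBt he₂).mpr (Or.inr ⟨he₁, hste₁sk₂⟩)
  have hdisj : Disjoint (skw e₁) (skw e₂) := skw_disjoint he₂sk₁
  have hid₁ : symmDiff T₁ (skw e₂) = symmDiff B (skw e₁ ∪ skw e₂) := by
    rw [hT₁def, symmDiff_assoc]
    congr 1
    rw [hdisj.symmDiff_eq_sup, Finset.sup_eq_union]
  have hid₂ : symmDiff T₂ (skw e₁) = symmDiff B (skw e₁ ∪ skw e₂) := by
    rw [hT₂def, symmDiff_assoc]
    congr 1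
    rw [symmDiff_comm, hdisj.symmDiff_eq_sup, Finset.sup_eq_union]
  -- the two possible intersection elements
  have hiff₁ : st e₂ ∈ C₁ ↔ symmDiff B (skw e₁ ∪ skw e₂) ∈ 𝓑 := by
    constructor
    · intro hm
      have := circuit_mem_char h hB he₁ hC₁ hC₁T hm
      rwa [skw_st, hid₁] at this
    · intro hm
      exact circuit_mem_of_basis hC₁ hT₁t hC₁T hste₂T₁ (by rwa [skw_st, hid₁])
  have hiff₂ : st e₁ ∈ C₂ ↔ symmDiff B (skw e₁ ∪ skw e₂) ∈ 𝓑 := by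
    constructor
    · intro hm
      have := circuit_mem_char h hB he₂ hC₂ hC₂T hm
      rwa [skw_st, hid₂] at this
    · intro hm
      exact circuit_mem_of_basis hC₂ hT₂t hC₂T hste₁T₂ (by rwa [skw_st, hid₂])
  have mem_S : ∀ x, x ∈ C₁ ∩ C₂.image st ↔ (x ∈ C₁ ∧ st x ∈ C₂) := by
    intro x
    rw [Finset.mem_inter, mem_image_st]
  have hSsub : ∀ x ∈ C₁ ∩ C₂.image st, x = e₁ ∨ x = st e₂ := by
    intro x hx
    obtain ⟨hx₁, hx₂⟩ := (mem_S x).mp hx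
    rcases (mem_fundT hBt he₁).mp (hC₁T hx₁) with rfl | ⟨hxB, _⟩
    · exact Or.inl rfl
    · rcases (mem_fundT hBt he₂).mp (hC₂T hx₂) with heq | ⟨hxB', _⟩
      · right
        have := congrArg st heq
        rwa [st_st] at this
      · exact absurd hxB' ((trans_st hBt x).mp hxB)
  have hPS : symmDiff B (skw e₁ ∪ skw e₂) ∈ 𝓑 →
      e₁ ∈ C₁ ∩ C₂.image st ∧ st e₂ ∈ C₁ ∩ C₂.image st := by
    intro hP
    constructor
    · exact (mem_S e₁).mpr ⟨he₁C₁, hiff₂.mpr hP⟩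
    · exact (mem_S (st e₂)).mpr ⟨hiff₁.mpr hP, by rw [st_st]; exact he₂C₂⟩
  have hSP : (C₁ ∩ C₂.image st).Nonempty → symmDiff B (skw e₁ ∪ skw e₂) ∈ 𝓑 := by
    rintro ⟨x, hx⟩
    rcases hSsub x hx with rfl | rfl
    · exact hiff₂.mp ((mem_S x).mp hx).2
    · exact hiff₁.mp ((mem_S (st e₂)).mp hx).1
  constructor
  · constructor
    · intro hne
      have hP := hSP hne
      have hPS' := hPS hP
      have hSeq : C₁ ∩ C₂.image st = {e₁, st e₂} := by
        apply Finset.Subset.antisymm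
        · intro x hx
          rcases hSsub x hx with rfl | rfl
          · exact Finset.mem_insert_self _ _
          · exact Finset.mem_insert_of_mem (Finset.mem_singleton_self _)
        · intro x hx
          rcases Finset.mem_insert.mp hx with rfl | hx'
          · exact hPS'.1
          · rw [Finset.mem_singleton] at hx'
            subst hx'
            exact hPS'.2
      rw [hSeq, Finset.card_insert_of_notMem (by rwa [Finset.mem_singleton]),
        Finset.card_singleton]
    · intro hcard
      rw [← Finset.card_pos, hcard]
      omega
  · exact ⟨hSP, fun hP => ⟨e₁, (hPS hP).1⟩⟩
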